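/- Let Ω ⊆ ℝⁿ be an open convex set, u : Ω → ℝ a convex differentiable function, and x₀ ∈ Ω. Then for every r > 0: x₀ + (1/2)(S_{r²}(u,x₀) − x₀) ⊆ D_r(u,x₀) ⊆ S_{r²}(u,x₀), where x₀ + (1/2)(S − x₀) denotes the dilation of the set S by factor 1/2 about x₀. -/

import Mathlib

noncomputable section

open MeasureTheory Set Metric
open scoped RealInnerProductSpace Pointwise

abbrev En (n : ℕ) := EuclideanSpace ℝ (Fin n)

/-- Section of `u` at `x₀` of height `h` (gradient via `gradient`). -/
def sectionAt {n : ℕ} (Ω : Set (En n)) (u : En n → ℝ) (x₀ : En n) (h : ℝ) : Set (En n) :=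
  {x ∈ Ω | u x - u x₀ - ⟪gradient u x₀, x - x₀⟫ ≤ h}

/-- Extrinsic ball `D_r(u, x₀)`. -/
def extBall {n : ℕ} (Ω : Set (En n)) (u : En n → ℝ) (x₀ : En n) (r : ℝ) : Set (En n) :=
  {x ∈ Ω | ⟪x - x₀, gradient u x - gradient u x₀⟫ ≤ r ^ 2}

/-- Gradient inequality for convex differentiable functions. -/
lemma grad_le {n : ℕ} {Ω : Set (En n)} (hΩo : IsOpen Ω) {u : En n → ℝ}
    (hu : ConvexOn ℝ Ω u) (hdiff : DifferentiableOn ℝ u Ω)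
    {x y : En n} (hx : x ∈ Ω) (hy : y ∈ Ω) :
    ⟪gradient u x, y - x⟫ ≤ u y - u x := by
  set c : ℝ → En n := fun t => x + t • (y - x) with hc
  have hcx : ∀ t : ℝ, c t = AffineMap.lineMap x y t := by
    intro t
    simp [hc, AffineMap.lineMap_apply, vsub_eq_sub, vadd_eq_add]
    abel
  have hconv : ConvexOn ℝ (c ⁻¹' Ω) (u ∘ c) := by
    have := (hu.comp_affineMap (AffineMap.lineMap x y))
    have he : u ∘ c = u ∘ (AffineMap.lineMap x y) := by funext t; simp [hcx t]
    have hs : c ⁻¹' Ω = (AffineMap.lineMap x y : ℝ →ᵃ[ℝ] En n) ⁻¹' Ω := by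
      ext t; simp [mem_preimage, hcx t]
    rw [he, hs]; exact this
  have h0 : (0 : ℝ) ∈ c ⁻¹' Ω := by simpa [hc] using hx
  have h1 : (1 : ℝ) ∈ c ⁻¹' Ω := by simpa [hc] using hy
  have hF : HasFDerivAt u ((InnerProductSpace.toDual ℝ (En n)) (gradient u x)) x :=
    ((hdiff.differentiableAt (hΩo.mem_nhds hx)).hasGradientAt).hasFDerivAt
  have hcd : HasDerivAt c (y - x) 0 := by
    simpa [hc] using (((hasDerivAt_id (0:ℝ)).smul_const (y - x)).const_add x)
  have hgd : HasDerivAt (u ∘ c) ⟪gradient u x, y - x⟫ 0 := by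
    have hF' : HasFDerivAt u ((InnerProductSpace.toDual ℝ (En n)) (gradient u x)) (c 0) := by
      simpa [hc] using hF
    have := hF'.comp_hasDerivAt (0:ℝ) hcd
    simpa [hc, InnerProductSpace.toDual_apply_apply] using this
  have := hconv.le_slope_of_hasDerivAt h0 h1 one_pos hgd
  simpa [slope, hc] using this

/-- Comparison between sections and extrinsic balls:
`x₀ + ½(S_{r²}(u,x₀) - x₀) ⊆ D_r(u,x₀) ⊆ S_{r²}(u,x₀)`. -/
theorem section_extBall_comparison
    (n : ℕ) (Ω : Set (En n)) (hΩo : IsOpen Ω) (hΩc : Convex ℝ Ω)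
    (u : En n → ℝ) (hu : ConvexOn ℝ Ω u) (hdiff : DifferentiableOn ℝ u Ω)
    (x₀ : En n) (hx₀ : x₀ ∈ Ω) (r : ℝ) (hr : 0 < r) :
    (fun x => x₀ + (1/2 : ℝ) • (x - x₀)) '' sectionAt Ω u x₀ (r ^ 2) ⊆ extBall Ω u x₀ r ∧
      extBall Ω u x₀ r ⊆ sectionAt Ω u x₀ (r ^ 2) := by
  simp only [sectionAt, extBall]
  constructor
  · rintro _ ⟨x, ⟨hxΩ, hS⟩, rfl⟩
    set y : En n := x₀ + (1/2 : ℝ) • (x - x₀) with hy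
    have hyΩ : y ∈ Ω := by
      have := hΩc hx₀ hxΩ (by norm_num : (0:ℝ) ≤ 1/2) (by norm_num : (0:ℝ) ≤ 1/2) (by norm_num)
      convert this using 1
      rw [hy]; module
    have e1 : x - y = y - x₀ := by rw [hy]; module
    have e2 : x - x₀ = (2:ℝ) • (y - x₀) := by rw [hy]; module
    have h1 : ⟪gradient u y, x - y⟫ ≤ u x - u y := grad_le hΩo hu hdiff hyΩ hxΩ
    have h2 : ⟪gradient u x₀, y - x₀⟫ ≤ u y - u x₀ := grad_le hΩo hu hdiff hx₀ hyΩ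
    rw [e1] at h1
    rw [e2, real_inner_smul_right] at hS
    refine ⟨hyΩ, ?_⟩
    have key : ⟪y - x₀, gradient u y - gradient u x₀⟫
        = ⟪gradient u y, y - x₀⟫ - ⟪gradient u x₀, y - x₀⟫ := by
      rw [inner_sub_right, real_inner_comm (y - x₀) (gradient u y),
        real_inner_comm (y - x₀) (gradient u x₀)]
    rw [key]
    linarith
  · rintro x ⟨hxΩ, hD⟩
    have h1 : ⟪gradient u x, x₀ - x⟫ ≤ u x₀ - u x := grad_le hΩo hu hdiff hxΩ hx₀
    rw [show x₀ - x = -(x - x₀) by abel, inner_neg_right] at h1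
    rw [inner_sub_right] at hD
    have c1 : ⟪x - x₀, gradient u x⟫ = ⟪gradient u x, x - x₀⟫ := real_inner_comm _ _
    have c2 : ⟪x - x₀, gradient u x₀⟫ = ⟪gradient u x₀, x - x₀⟫ := real_inner_comm _ _
    exact ⟨hxΩ, by linarith⟩
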